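/- Let (M, 𝓛) be a finite linear space in which every line is either affine or projective, and suppose that both an affine line and a projective line exist. Form the extended incidence structure whose point set is M together with one additional point ∞, and whose lines are the projective lines of 𝓛 together with the sets A ∪ {∞} for each affine line A of 𝓛. Then in this extended structure any two distinct points lie on exactly one common line, any two distinct lines meet in exactly one point, and there exist four points no three of which are collinear; i.e., the extended structure is a projective plane. -/

import Mathlib

/-- A linear space: a point set `M` together with a collection of lines (subsets of `M`)
such that every line has at least 3 points, any two distinct points lie on exactly one
common line, and every point lies on at least 3 lines. -/
structure LinearSpace (M : Type*) where
  lines : Set (Set M)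
  exists_three_points : ∀ L ∈ lines, ∃ a b c : M,
    a ∈ L ∧ b ∈ L ∧ c ∈ L ∧ a ≠ b ∧ a ≠ c ∧ b ≠ c
  join_unique : ∀ p q : M, p ≠ q → ∃! L, L ∈ lines ∧ p ∈ L ∧ q ∈ L
  exists_three_lines : ∀ p : M, ∃ L₁ L₂ L₃, L₁ ∈ lines ∧ L₂ ∈ lines ∧ L₃ ∈ lines ∧
    p ∈ L₁ ∧ p ∈ L₂ ∧ p ∈ L₃ ∧ L₁ ≠ L₂ ∧ L₁ ≠ L₃ ∧ L₂ ≠ L₃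

namespace LinearSpace

variable {M : Type*}

/-- Two lines are parallel if they are equal or disjoint. -/
def Parallel (L K : Set M) : Prop := L = K ∨ L ∩ K = ∅

/-- A line `L` is affine if for every point `p ∉ L` there is exactly one line
through `p` disjoint from `L`. -/
def IsAffine (S : LinearSpace M) (L : Set M) : Prop :=
  L ∈ S.lines ∧ ∀ p ∉ L, ∃! K, K ∈ S.lines ∧ p ∈ K ∧ K ∩ L = ∅

/-- A line is projective if it meets every other line. -/
def IsProjective (S : LinearSpace M) (L : Set M) : Prop :=
  L ∈ S.lines ∧ ∀ K ∈ S.lines, K ≠ L → (L ∩ K).Nonempty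

/-- An affine line is biaffine if every line parallel to it is also affine. -/
def IsBiaffine (S : LinearSpace M) (L : Set M) : Prop :=
  S.IsAffine L ∧ ∀ K ∈ S.lines, Parallel K L → S.IsAffine K

end LinearSpace

open LinearSpace

/-- The lines of the extended incidence structure obtained by adding one point `∞`
(here: `none : Option M`): the projective lines of `S` (copied over), together with
`A ∪ {∞}` for each affine line `A` of `S`. -/
def LinearSpace.extLines {M : Type*} (S : LinearSpace M) : Set (Set (Option M)) :=
  {K | ∃ L : Set M, S.IsProjective L ∧ K = (some '' L)} ∪
  {K | ∃ A : Set M, S.IsAffine A ∧ K = insert (none : Option M) (some '' A)}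

/-!
By Playfair's axiom at an affine line `X`, the lines parallel to `X` (equal to it or disjoint
from it) partition `M`. Counting the lines through a point off both lines gives
`|P| = |A| + 1` for `P` projective and `A` affine. The projective line `P` meets every member of
the parallel class of an affine line `B` in exactly one point, so that class has at least
`|P| > |A|` members, and they cannot all meet `A`: some line `D` is parallel to both `A` and `B`.
Since `D` is affine, the parallel class of `D` is a partition, so `A` and `B` are parallel.
Thus the affine lines form a single parallel class, `∞` is its common point, and the axioms of
a projective plane follow by cases on whether the points and lines involve `∞`.
-/

namespace LinearSpace

variable {M : Type*} (S : LinearSpace M)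

theorem eq_of_mem_of_mem {L K : Set M} (hL : L ∈ S.lines) (hK : K ∈ S.lines) {p q : M}
    (hpq : p ≠ q) (hpL : p ∈ L) (hqL : q ∈ L) (hpK : p ∈ K) (hqK : q ∈ K) : L = K :=
  (S.join_unique p q hpq).unique ⟨hL, hpL, hqL⟩ ⟨hK, hpK, hqK⟩

theorem inter_subsingleton {L K : Set M} (hL : L ∈ S.lines) (hK : K ∈ S.lines) (hLK : L ≠ K) :
    (L ∩ K).Subsingleton := fun p hp q hq => by
  by_contra hpq
  exact hLK (S.eq_of_mem_of_mem hL hK hpq hp.1 hq.1 hp.2 hq.2)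

theorem exists_pair_mem_ne {L : Set M} (hL : L ∈ S.lines) (q : M) :
    ∃ a ∈ L, ∃ b ∈ L, a ≠ b ∧ a ≠ q ∧ b ≠ q := by
  obtain ⟨a, b, c, ha, hb, hc, hab, hac, hbc⟩ := S.exists_three_points L hL
  by_cases haq : a = q
  · subst haq
    exact ⟨b, hb, c, hc, hbc, Ne.symm hab, Ne.symm hac⟩
  by_cases hbq : b = q
  · subst hbq
    exact ⟨a, ha, c, hc, hac, hab, Ne.symm hbc⟩
  exact ⟨a, ha, b, hb, hab, haq, hbq⟩

theorem exists_line_ne_ne (p : M) (L K : Set M) :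
    ∃ N ∈ S.lines, p ∈ N ∧ N ≠ L ∧ N ≠ K := by
  obtain ⟨L₁, L₂, L₃, h₁, h₂, h₃, hp₁, hp₂, hp₃, h₁₂, h₁₃, h₂₃⟩ := S.exists_three_lines p
  by_contra! h
  have := h L₁ h₁ hp₁
  have := h L₂ h₂ hp₂
  have := h L₃ h₃ hp₃
  by_cases L₁ = L <;> by_cases L₂ = L <;> by_cases L₃ = L <;> simp_all

theorem exists_notMem_notMem {L K : Set M} (hL : L ∈ S.lines) (hK : K ∈ S.lines) {q : M}
    (hqL : q ∈ L) (hqK : q ∈ K) : ∃ z, z ∉ L ∧ z ∉ K := by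
  obtain ⟨N, hN, hqN, hNL, hNK⟩ := S.exists_line_ne_ne q L K
  obtain ⟨z, hzN, -, -, -, hzq, -⟩ := S.exists_pair_mem_ne hN q
  exact ⟨z, fun hzL => hNL (S.eq_of_mem_of_mem hN hL hzq hzN hqN hzL hqL),
    fun hzK => hNK (S.eq_of_mem_of_mem hN hK hzq hzN hqN hzK hqK)⟩

variable {S}

theorem IsAffine.not_isProjective {L : Set M} (hL : S.IsAffine L) : ¬ S.IsProjective L := by
  intro hP
  obtain ⟨q, -, -, hq, -⟩ := S.exists_three_points L hL.1
  obtain ⟨z, hz, -⟩ := S.exists_notMem_notMem hL.1 hL.1 hq hq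
  obtain ⟨K, ⟨hK, hzK, hKL⟩, -⟩ := hL.2 z hz
  obtain ⟨x, hxL, hxK⟩ := hP.2 K hK (fun h => hz (h ▸ hzK))
  exact Set.eq_empty_iff_forall_notMem.1 hKL x ⟨hxK, hxL⟩

variable (S) in
def linesThrough (z : M) : Set (Set M) := {K | K ∈ S.lines ∧ z ∈ K}

theorem ncard_linesThrough_meeting {L : Set M} (hL : L ∈ S.lines) {z : M} (hz : z ∉ L) :
    {K ∈ S.linesThrough z | (K ∩ L).Nonempty}.ncard = L.ncard := by
  have hne : ∀ x ∈ L, z ≠ x := fun x hx h => hz (h ▸ hx)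
  choose join hjoin using fun x hx => (S.join_unique z x (hne x hx)).exists
  refine (Set.ncard_congr join (fun x hx => ?_) (fun x y hx hy hxy => ?_) (fun K hK => ?_)).symm
  · exact ⟨⟨(hjoin x hx).1, (hjoin x hx).2.1⟩, x, (hjoin x hx).2.2, hx⟩
  · have hJL : join x hx ≠ L := fun h => hz (h ▸ (hjoin x hx).2.1)
    exact S.inter_subsingleton (hjoin x hx).1 hL hJL ⟨(hjoin x hx).2.2, hx⟩
      ⟨hxy ▸ (hjoin y hy).2.2, hy⟩
  · obtain ⟨⟨hK, hzK⟩, x, hxK, hxL⟩ := hK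
    exact ⟨x, hxL, S.eq_of_mem_of_mem (hjoin x hxL).1 hK (hne x hxL) (hjoin x hxL).2.1
      (hjoin x hxL).2.2 hzK hxK⟩

theorem IsProjective.ncard_linesThrough {L : Set M} (hL : S.IsProjective L) {z : M}
    (hz : z ∉ L) : (S.linesThrough z).ncard = L.ncard := by
  rw [← S.ncard_linesThrough_meeting hL.1 hz, Set.sep_eq_self_iff_mem_true.2]
  rintro K ⟨hK, hzK⟩
  rw [Set.inter_comm]
  exact hL.2 K hK (fun h => hz (h ▸ hzK))

variable [Finite M] in
theorem IsAffine.ncard_linesThrough {L : Set M} (hL : S.IsAffine L) {z : M}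
    (hz : z ∉ L) : (S.linesThrough z).ncard = L.ncard + 1 := by
  obtain ⟨D, ⟨hD, hzD, hDL⟩, hDuniq⟩ := hL.2 z hz
  have hsplit : S.linesThrough z = insert D {K ∈ S.linesThrough z | (K ∩ L).Nonempty} := by
    ext K
    refine ⟨fun hK => ?_, ?_⟩
    · rcases (K ∩ L).eq_empty_or_nonempty with h | h
      · exact Or.inl (hDuniq K ⟨hK.1, hK.2, h⟩)
      · exact Or.inr ⟨hK, h⟩
    · rintro (rfl | ⟨hK, -⟩)
      exacts [⟨hD, hzD⟩, hK]
  rw [hsplit, Set.ncard_insert_of_notMem (fun h => h.2.ne_empty hDL),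
    S.ncard_linesThrough_meeting hL.1 hz]

variable [Finite M] in
theorem IsProjective.ncard_eq_ncard_add_one {P A : Set M} (hP : S.IsProjective P)
    (hA : S.IsAffine A) : P.ncard = A.ncard + 1 := by
  obtain ⟨q, hqP, hqA⟩ := hP.2 A hA.1 (fun h => hA.not_isProjective (h ▸ hP))
  obtain ⟨z, hzP, hzA⟩ := S.exists_notMem_notMem hP.1 hA.1 hqP hqA
  rw [← hP.ncard_linesThrough hzP, hA.ncard_linesThrough hzA]

theorem Parallel.symm {L K : Set M} (h : Parallel L K) : Parallel K L := by
  rcases h with h | h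
  exacts [Or.inl h.symm, Or.inr (Set.inter_comm L K ▸ h)]

theorem Parallel.eq_of_mem {L K : Set M} (h : Parallel L K) {x : M} (hxL : x ∈ L) (hxK : x ∈ K) :
    L = K :=
  h.resolve_right fun hLK => Set.eq_empty_iff_forall_notMem.1 hLK x ⟨hxL, hxK⟩

variable (S) in
def parallelClass (X : Set M) : Set (Set M) := {D | D ∈ S.lines ∧ Parallel D X}

theorem IsAffine.exists_parallel_mem {X : Set M} (hX : S.IsAffine X) (x : M) :
    ∃ D ∈ S.parallelClass X, x ∈ D := by
  by_cases hx : x ∈ X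
  · exact ⟨X, ⟨hX.1, Or.inl rfl⟩, hx⟩
  · obtain ⟨D, ⟨hD, hxD, hDX⟩, -⟩ := hX.2 x hx
    exact ⟨D, ⟨hD, Or.inr hDX⟩, hxD⟩

theorem IsAffine.eq_of_parallel_of_mem {X Y Z : Set M} (hX : S.IsAffine X)
    (hY : Y ∈ S.parallelClass X) (hZ : Z ∈ S.parallelClass X) {x : M} (hxY : x ∈ Y)
    (hxZ : x ∈ Z) : Y = Z := by
  obtain ⟨hY, rfl | hYX⟩ := hY <;> obtain ⟨hZ, rfl | hZX⟩ := hZ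
  · rfl
  · exact (Set.eq_empty_iff_forall_notMem.1 hZX x ⟨hxZ, hxY⟩).elim
  · exact (Set.eq_empty_iff_forall_notMem.1 hYX x ⟨hxY, hxZ⟩).elim
  · have hxX : x ∉ X := fun hxX => Set.eq_empty_iff_forall_notMem.1 hYX x ⟨hxY, hxX⟩
    exact (hX.2 x hxX).unique ⟨hY, hxY, hYX⟩ ⟨hZ, hxZ, hZX⟩

theorem IsAffine.of_mem_parallelClass (hdich : ∀ L ∈ S.lines, S.IsAffine L ∨ S.IsProjective L)
    {X D : Set M} (hX : S.IsAffine X) (hD : D ∈ S.parallelClass X) : S.IsAffine D := by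
  obtain ⟨hD, rfl | hDX⟩ := hD
  · exact hX
  refine (hdich D hD).resolve_right fun hP => ?_
  by_cases hDX' : D = X
  · exact hX.not_isProjective (hDX' ▸ hP)
  · exact hP.2 X hX.1 (Ne.symm hDX') |>.ne_empty hDX

theorem IsAffine.ncard_le_ncard_parallelClass [Finite M] {X P : Set M} (hX : S.IsAffine X)
    (hP : S.IsProjective P) : P.ncard ≤ (S.parallelClass X).ncard := by
  choose D hD hxD using hX.exists_parallel_mem
  refine Set.ncard_le_ncard_of_injOn D (fun x _ => hD x) (fun x hx y hy hxy => ?_)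
  have hDP : D x ≠ P := by
    rintro h
    obtain ⟨-, hPX | hPX⟩ := h ▸ hD x
    · exact hX.not_isProjective (hPX ▸ hP)
    · exact hP.2 X hX.1 (fun h' => hX.not_isProjective (h' ▸ hP)) |>.ne_empty hPX
  exact S.inter_subsingleton (hD x).1 hP.1 hDP ⟨hxD x, hx⟩ ⟨hxy ▸ hxD y, hy⟩

theorem IsAffine.ncard_parallelClass_le [Finite M] {X L : Set M} (hX : S.IsAffine X)
    (hL : ∀ D ∈ S.parallelClass X, (D ∩ L).Nonempty) : (S.parallelClass X).ncard ≤ L.ncard := by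
  choose D hD hxD using hX.exists_parallel_mem
  refine le_trans (Set.ncard_le_ncard (t := D '' L) fun E hE => ?_) Set.ncard_image_le
  obtain ⟨x, hxE, hxL⟩ := hL E hE
  exact ⟨x, hxL, hX.eq_of_parallel_of_mem (hD x) hE (hxD x) hxE⟩

theorem IsAffine.parallel [Finite M] (hdich : ∀ L ∈ S.lines, S.IsAffine L ∨ S.IsProjective L)
    {P A B : Set M} (hP : S.IsProjective P) (hA : S.IsAffine A) (hB : S.IsAffine B) :
    Parallel A B := by
  obtain ⟨D, hDB, hDA⟩ : ∃ D ∈ S.parallelClass B, Parallel D A := by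
    by_contra! h
    have hmeet : ∀ D ∈ S.parallelClass B, (D ∩ A).Nonempty := fun D hD =>
      Set.nonempty_iff_ne_empty.2 fun hDA => h D hD (Or.inr hDA)
    have := calc A.ncard + 1 = P.ncard := (hP.ncard_eq_ncard_add_one hA).symm
      _ ≤ (S.parallelClass B).ncard := hB.ncard_le_ncard_parallelClass hP
      _ ≤ A.ncard := hB.ncard_parallelClass_le hmeet
    omega
  have hD := hB.of_mem_parallelClass hdich hDB
  refine or_iff_not_imp_right.2 fun hAB => ?_
  obtain ⟨x, hxA, hxB⟩ := Set.nonempty_iff_ne_empty.2 hAB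
  exact hD.eq_of_parallel_of_mem ⟨hA.1, hDA.symm⟩ ⟨hB.1, hDB.2.symm⟩ hxA hxB

theorem existsUnique_isAffine_mem [Finite M]
    (hdich : ∀ L ∈ S.lines, S.IsAffine L ∨ S.IsProjective L) {P A : Set M}
    (hP : S.IsProjective P) (hA : S.IsAffine A) (x : M) : ∃! B, S.IsAffine B ∧ x ∈ B := by
  obtain ⟨B, hB, hxB⟩ := hA.exists_parallel_mem x
  have hB := hA.of_mem_parallelClass hdich hB
  exact ⟨B, ⟨hB, hxB⟩, fun C ⟨hC, hxC⟩ => (hC.parallel hdich hP hB).eq_of_mem hxC hxB⟩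

section Extension

variable {K K₁ K₂ : Set (Option M)}

theorem preimage_some_insert_none (L : Set M) : some ⁻¹' insert none (some '' L) = L := by
  ext
  simp

theorem preimage_some_mem_lines (hK : K ∈ S.extLines) : some ⁻¹' K ∈ S.lines := by
  rcases hK with ⟨L, hL, rfl⟩ | ⟨A, hA, rfl⟩
  · simpa [Set.preimage_image_eq _ (Option.some_injective M)] using hL.1
  · simpa [preimage_some_insert_none] using hA.1

theorem none_mem_iff_isAffine (hK : K ∈ S.extLines) : none ∈ K ↔ S.IsAffine (some ⁻¹' K) := by
  rcases hK with ⟨L, hL, rfl⟩ | ⟨A, hA, rfl⟩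
  · simpa [Set.preimage_image_eq _ (Option.some_injective M)] using fun h => h.not_isProjective hL
  · simpa [preimage_some_insert_none] using hA

theorem eq_of_preimage_some_eq (hK₁ : K₁ ∈ S.extLines) (hK₂ : K₂ ∈ S.extLines)
    (h : some ⁻¹' K₁ = some ⁻¹' K₂) : K₁ = K₂ := by
  ext (_ | x)
  · rw [S.none_mem_iff_isAffine hK₁, S.none_mem_iff_isAffine hK₂, h]
  · exact Set.ext_iff.1 h x

theorem exists_mem_extLines_preimage_some_eq
    (hdich : ∀ L ∈ S.lines, S.IsAffine L ∨ S.IsProjective L) {L : Set M} (hL : L ∈ S.lines) :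
    ∃ K ∈ S.extLines, some ⁻¹' K = L := by
  rcases hdich L hL with hA | hP
  · exact ⟨_, Or.inr ⟨L, hA, rfl⟩, preimage_some_insert_none L⟩
  · exact ⟨_, Or.inl ⟨L, hP, rfl⟩, Set.preimage_image_eq _ (Option.some_injective M)⟩

variable [Finite M] (hdich : ∀ L ∈ S.lines, S.IsAffine L ∨ S.IsProjective L) {P : Set M}
  (hP : S.IsProjective P)
include hdich hP

theorem existsUnique_extLines_mem_mem {A : Set M} (hA : S.IsAffine A) {p q : Option M}
    (hpq : p ≠ q) : ∃! K, K ∈ S.extLines ∧ p ∈ K ∧ q ∈ K := by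
  wlog hq : q.isSome generalizing p q with H
  · obtain rfl : q = none := Option.not_isSome_iff_eq_none.1 hq
    obtain ⟨x, rfl⟩ := Option.ne_none_iff_exists'.1 hpq
    simpa only [and_comm (a := some x ∈ _)] using H hpq.symm rfl
  obtain ⟨y, rfl⟩ := Option.isSome_iff_exists.1 hq
  rcases p with _ | x
  · obtain ⟨B, ⟨hB, hyB⟩, hBuniq⟩ := S.existsUnique_isAffine_mem hdich hP hA y
    have hK : insert none (some '' B) ∈ S.extLines := Or.inr ⟨B, hB, rfl⟩
    refine ⟨_, ⟨hK, Set.mem_insert _ _, Set.mem_insert_of_mem _ ⟨y, hyB, rfl⟩⟩, ?_⟩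
    rintro K ⟨hK', hnone, hy⟩
    refine S.eq_of_preimage_some_eq hK' hK ?_
    rw [preimage_some_insert_none, hBuniq _ ⟨(S.none_mem_iff_isAffine hK').1 hnone, hy⟩]
  · have hxy : x ≠ y := fun h => hpq (h ▸ rfl)
    obtain ⟨L, ⟨hL, hxL, hyL⟩, hLuniq⟩ := S.join_unique x y hxy
    obtain ⟨K, hK, rfl⟩ := S.exists_mem_extLines_preimage_some_eq hdich hL
    refine ⟨K, ⟨hK, hxL, hyL⟩, fun K' ⟨hK', hx, hy⟩ => ?_⟩
    exact S.eq_of_preimage_some_eq hK' hK (hLuniq _ ⟨S.preimage_some_mem_lines hK', hx, hy⟩)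

theorem existsUnique_mem_mem_of_extLines_ne (hK₁ : K₁ ∈ S.extLines) (hK₂ : K₂ ∈ S.extLines)
    (hne : K₁ ≠ K₂) : ∃! x, x ∈ K₁ ∧ x ∈ K₂ := by
  set L₁ := some ⁻¹' K₁
  set L₂ := some ⁻¹' K₂
  have hL₁ : L₁ ∈ S.lines := S.preimage_some_mem_lines hK₁
  have hL₂ : L₂ ∈ S.lines := S.preimage_some_mem_lines hK₂
  have hL : L₁ ≠ L₂ := fun h => hne (S.eq_of_preimage_some_eq hK₁ hK₂ h)
  by_cases hboth : S.IsAffine L₁ ∧ S.IsAffine L₂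
  · have hdisj : L₁ ∩ L₂ = ∅ := (hboth.1.parallel hdich hP hboth.2).resolve_left hL
    refine ⟨none, ⟨(S.none_mem_iff_isAffine hK₁).2 hboth.1,
      (S.none_mem_iff_isAffine hK₂).2 hboth.2⟩, ?_⟩
    rintro (_ | x) hx
    · rfl
    · exact (Set.eq_empty_iff_forall_notMem.1 hdisj x hx).elim
  · obtain ⟨z, hz⟩ : (L₁ ∩ L₂).Nonempty := by
      rcases not_and_or.1 hboth with h | h
      · exact ((hdich L₁ hL₁).resolve_left h).2 L₂ hL₂ hL.symm
      · exact Set.inter_comm L₂ L₁ ▸ ((hdich L₂ hL₂).resolve_left h).2 L₁ hL₁ hL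
    refine ⟨some z, hz, ?_⟩
    rintro (_ | x) hx
    · exact (hboth ⟨(S.none_mem_iff_isAffine hK₁).1 hx.1,
        (S.none_mem_iff_isAffine hK₂).1 hx.2⟩).elim
    · exact congrArg some (S.inter_subsingleton hL₁ hL₂ hL hx hz)

theorem exists_quadrangle_extLines {A : Set M} (hA : S.IsAffine A) :
    ∃ a b c d : Option M, a ≠ b ∧ a ≠ c ∧ a ≠ d ∧ b ≠ c ∧ b ≠ d ∧ c ≠ d ∧
      ∀ K ∈ S.extLines, ¬ (a ∈ K ∧ b ∈ K ∧ c ∈ K) ∧ ¬ (a ∈ K ∧ b ∈ K ∧ d ∈ K) ∧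
        ¬ (a ∈ K ∧ c ∈ K ∧ d ∈ K) ∧ ¬ (b ∈ K ∧ c ∈ K ∧ d ∈ K) := by
  have hPA : P ≠ A := fun h => hA.not_isProjective (h ▸ hP)
  obtain ⟨e, heP, heA⟩ := hP.2 A hA.1 hPA.symm
  obtain ⟨a, haP, b, hbP, hab, hae, hbe⟩ := S.exists_pair_mem_ne hP.1 e
  obtain ⟨c, hcA, -, -, -, hce, -⟩ := S.exists_pair_mem_ne hA.1 e
  have hPA_inter := S.inter_subsingleton hP.1 hA.1 hPA
  have haA : a ∉ A := fun h => hae (hPA_inter ⟨haP, h⟩ ⟨heP, heA⟩)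
  have hbA : b ∉ A := fun h => hbe (hPA_inter ⟨hbP, h⟩ ⟨heP, heA⟩)
  have hcP : c ∉ P := fun h => hce (hPA_inter ⟨h, hcA⟩ ⟨heP, heA⟩)
  have hac : a ≠ c := fun h => haA (h ▸ hcA)
  have hbc : b ≠ c := fun h => hbA (h ▸ hcA)
  have hab_line : ∀ K ∈ S.extLines, some a ∈ K → some b ∈ K → some c ∉ K ∧ none ∉ K := by
    intro K hK ha hb
    have hKP : some ⁻¹' K = P :=
      S.eq_of_mem_of_mem (S.preimage_some_mem_lines hK) hP.1 hab ha hb haP hbP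
    exact ⟨fun hc => hcP (hKP ▸ hc),
      fun hn => ((S.none_mem_iff_isAffine hK).1 hn).not_isProjective (hKP ▸ hP)⟩
  have hc_line : ∀ K ∈ S.extLines, some c ∈ K → none ∈ K → some a ∉ K ∧ some b ∉ K := by
    intro K hK hc hn
    have hKA : some ⁻¹' K = A :=
      (((S.none_mem_iff_isAffine hK).1 hn).parallel hdich hP hA).eq_of_mem hc hcA
    exact ⟨fun ha => haA (hKA ▸ ha), fun hb => hbA (hKA ▸ hb)⟩
  refine ⟨some a, some b, some c, none, by simpa, by simpa, Option.some_ne_none a, by simpa,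
    Option.some_ne_none b, Option.some_ne_none c, fun K hK => ?_⟩
  have := hab_line K hK
  have := hc_line K hK
  tauto

end Extension

end LinearSpace

/-- In a finite linear space in which every line is affine or projective, with both
kinds of lines present, the structure extended by one point at infinity is a
projective plane: two distinct points lie on exactly one common line, two distinct
lines meet in exactly one point, and there is a quadrangle. -/
theorem extended_structure_is_projective_plane {M : Type*} [Finite M]
    (S : LinearSpace M)
    (hdich : ∀ L ∈ S.lines, S.IsAffine L ∨ S.IsProjective L)
    (hex_aff : ∃ A : Set M, S.IsAffine A)
    (hex_proj : ∃ L : Set M, S.IsProjective L) :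
    (∀ p q : Option M, p ≠ q → ∃! K, K ∈ S.extLines ∧ p ∈ K ∧ q ∈ K) ∧
    (∀ K₁ ∈ S.extLines, ∀ K₂ ∈ S.extLines, K₁ ≠ K₂ → ∃! x, x ∈ K₁ ∧ x ∈ K₂) ∧
    (∃ a b c d : Option M, a ≠ b ∧ a ≠ c ∧ a ≠ d ∧ b ≠ c ∧ b ≠ d ∧ c ≠ d ∧
      ∀ K ∈ S.extLines, ¬ (a ∈ K ∧ b ∈ K ∧ c ∈ K) ∧ ¬ (a ∈ K ∧ b ∈ K ∧ d ∈ K) ∧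
        ¬ (a ∈ K ∧ c ∈ K ∧ d ∈ K) ∧ ¬ (b ∈ K ∧ c ∈ K ∧ d ∈ K)) := by
  obtain ⟨A, hA⟩ := hex_aff
  obtain ⟨P, hP⟩ := hex_proj
  exact ⟨fun _ _ hpq => S.existsUnique_extLines_mem_mem hdich hP hA hpq,
    fun _ hK₁ _ hK₂ hne => S.existsUnique_mem_mem_of_extLines_ne hdich hP hK₁ hK₂ hne,
    S.exists_quadrangle_extLines hdich hP hA⟩
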